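/- Let u be a negative Lebesgue-measurable function on the open unit ball 𝔹^{2n} of ℂⁿ, and suppose there exists A > 0 such that lim_{d→0⁺} Vol_{2n}({ξ ∈ 𝔹^{2n} : ‖ξ‖ > 1-d and u(ξ) < -Ad}) / d = 0. For z ≠ 0 and 0 < a, ε < 1/2, let B_{a,ε,z} = {ξ ∈ ℂⁿ \ {0} : ‖z/‖z‖ - ξ/‖ξ‖‖ < a and ‖z‖ ≤ ‖ξ‖ ≤ (1+ε)‖z‖}. Then for every a ∈ (0, 1/2) there exists ε_a > 0 such that sup_{ξ ∈ B_{a,ε,z}} u(ξ) ≥ -3Aε whenever ε and z ∈ 𝔹^{2n} satisfy ε_a > 3ε ≥ 1-‖z‖ ≥ ε > 0. -/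

import Mathlib

open MeasureTheory Filter Metric Topology ENNReal

noncomputable section

/-- `ℂⁿ` with its Euclidean structure. -/
abbrev Cn (n : ℕ) : Type := EuclideanSpace ℂ (Fin n)

instance (n : ℕ) : MeasurableSpace (Cn n) := MeasurableSpace.comap WithLp.ofLp MeasurableSpace.pi

instance (n : ℕ) : BorelSpace (Cn n) := ⟨(PiLp.borelSpace 2 (X := fun _ : Fin n => ℂ)).measurable_eq⟩

instance (n : ℕ) : MeasureSpace (Cn n) :=
  ⟨Measure.map (WithLp.toLp 2) (MeasureTheory.MeasureSpace.pi.volume : Measure (Fin n → ℂ))⟩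

variable {n : ℕ}

/-- The "positive part" of an extended real number, as an element of `ℝ≥0∞`. -/
def EReal.posPart (x : EReal) : ℝ≥0∞ := if x = ⊤ then ⊤ else ENNReal.ofReal x.toReal

/-- The (possibly infinite) integral of an `EReal`-valued function, defined as the
difference of the lower integrals of its positive and negative parts. -/
def erealIntegral {α : Type*} [MeasurableSpace α] (μ : Measure α) (f : α → EReal) : EReal :=
  ((∫⁻ a, (f a).posPart ∂μ : ℝ≥0∞) : EReal) - ((∫⁻ a, (-(f a)).posPart ∂μ : ℝ≥0∞) : EReal)

/-- A function `u : ℂⁿ → [-∞, ∞)` is plurisubharmonic on an (open) set `Ω` if it is upper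
semicontinuous on `Ω`, takes values in `[-∞, ∞)` on `Ω`, and satisfies the sub-mean value
inequality on every circle (inside `Ω`) contained in a complex line. -/
def PlurisubharmonicOn (Ω : Set (Cn n)) (u : Cn n → EReal) : Prop :=
  UpperSemicontinuousOn u Ω ∧ (∀ z ∈ Ω, u z ≠ ⊤) ∧
  ∀ z ∈ Ω, ∀ w : Cn n, ∀ r : ℝ, 0 < r →
    (∀ c : ℂ, ‖c‖ ≤ r → z + c • w ∈ Ω) →
    ((2 * Real.pi : ℝ) : EReal) * u z ≤
      erealIntegral (volume.restrict (Set.Ioc (0 : ℝ) (2 * Real.pi)))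
        (fun θ => u (z + ((r : ℂ) * Complex.exp (θ * Complex.I)) • w))

/-- The second derivative of `f` at `z` evaluated on the pair of vectors `(v, w)`. -/
def hess2 (f : Cn n → ℝ) (z v w : Cn n) : ℝ := iteratedFDeriv ℝ 2 f z ![v, w]

/-- The (diagonal of the) Levi form `L_f(z; v) = ∑ ∂²f/∂z_j∂z̄_k v_j v̄_k` of a real-valued
`C²` function, expressed via real second derivatives. -/
def leviForm (f : Cn n → ℝ) (z v : Cn n) : ℝ :=
  (hess2 f z v v + hess2 f z ((Complex.I : ℂ) • v) ((Complex.I : ℂ) • v)) / 4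

/-- The complex derivative `∂f(z)(v) = ∑_j ∂f/∂z_j(z) v_j` of a real-valued function. -/
def wirtingerDeriv (f : Cn n → ℝ) (z v : Cn n) : ℂ :=
  (((fderiv ℝ f z v : ℝ) : ℂ) - Complex.I * ((fderiv ℝ f z ((Complex.I : ℂ) • v) : ℝ) : ℂ)) / 2

/-- The complex Hessian matrix `(∂²f/∂z_j∂z̄_k(z))_{j,k}` of a real-valued function,
expressed via real second derivatives. -/
def complexHessian (f : Cn n → ℝ) (z : Cn n) : Matrix (Fin n) (Fin n) ℂ :=
  Matrix.of fun j k =>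
    (((hess2 f z (EuclideanSpace.single j 1) (EuclideanSpace.single k 1)
        + hess2 f z ((Complex.I : ℂ) • EuclideanSpace.single j 1)
            ((Complex.I : ℂ) • EuclideanSpace.single k 1)) / 4 : ℝ) : ℂ)
    + Complex.I * (((hess2 f z (EuclideanSpace.single j 1)
            ((Complex.I : ℂ) • EuclideanSpace.single k 1)
        - hess2 f z ((Complex.I : ℂ) • EuclideanSpace.single j 1)
            (EuclideanSpace.single k 1)) / 4 : ℝ) : ℂ)

/-- The density of the Monge–Ampère measure `(dd^c f)^n` of a `C²` function `f` with respect
to Lebesgue measure: `(dd^c f)^n = 4^n n! det(∂²f/∂z_j∂z̄_k) dV`. -/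
def maDensity (f : Cn n → ℝ) (z : Cn n) : ℝ :=
  (4 : ℝ) ^ n * (Nat.factorial n) * ((complexHessian f z).det).re

/-- `v` is a decreasing sequence of `C²` plurisubharmonic functions on `Ω`
converging pointwise to `u`. -/
def IsSmoothPshApprox (Ω : Set (Cn n)) (u : Cn n → EReal) (v : ℕ → Cn n → ℝ) : Prop :=
  (∀ j, ContDiffOn ℝ 2 (v j) Ω) ∧
  (∀ j, PlurisubharmonicOn Ω fun z => ((v j z : ℝ) : EReal)) ∧
  (∀ z ∈ Ω, Antitone fun j => v j z) ∧
  (∀ z ∈ Ω, Tendsto (fun j => ((v j z : ℝ) : EReal)) atTop (nhds (u z)))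

/-- `μ` is the (Bedford–Taylor–Cegrell) Monge–Ampère measure `(dd^c u)^n` of `u` on `Ω`:
there is at least one decreasing `C²` plurisubharmonic approximation of `u` on `Ω`, and along
every such approximation the smooth Monge–Ampère measures converge weakly to `μ`. -/
def IsMongeAmpereOf (Ω : Set (Cn n)) (u : Cn n → EReal) (μ : Measure (Cn n)) : Prop :=
  (∃ v, IsSmoothPshApprox Ω u v) ∧
  ∀ v, IsSmoothPshApprox Ω u v →
    ∀ f : Cn n → ℝ, Continuous f → HasCompactSupport f → tsupport f ⊆ Ω →
      Tendsto (fun j => ∫ z in Ω, f z * maDensity (v j) z) atTop (nhds (∫ z, f z ∂μ))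

/-- The Monge–Ampère measure `(dd^c u)^n` of `u` on `Ω` (junk value if it does not exist). -/
def mongeAmpere (Ω : Set (Cn n)) (u : Cn n → EReal) : Measure (Cn n) :=
  letI := Classical.propDecidable (∃ μ, IsMongeAmpereOf Ω u μ)
  if h : ∃ μ, IsMongeAmpereOf Ω u μ then h.choose else 0

/-- The Cegrell class `𝓔₀(Ω)`: bounded plurisubharmonic functions on `Ω` with boundary
limit `0` and finite total Monge–Ampère mass. -/
def InE0 (Ω : Set (Cn n)) (u : Cn n → EReal) : Prop :=
  PlurisubharmonicOn Ω u ∧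
  (∃ C : ℝ, ∀ z ∈ Ω, ((-C : ℝ) : EReal) ≤ u z ∧ u z ≤ ((C : ℝ) : EReal)) ∧
  (∀ ξ ∈ frontier Ω, Tendsto u (nhdsWithin ξ Ω) (nhds (0 : EReal))) ∧
  mongeAmpere Ω u Ω < ⊤

/-- The Cegrell class `𝓕(Ω)`: plurisubharmonic `u` admitting a decreasing sequence in
`𝓔₀(Ω)` converging pointwise to `u` with uniformly bounded Monge–Ampère masses. -/
def InCegrellF (Ω : Set (Cn n)) (u : Cn n → EReal) : Prop :=
  PlurisubharmonicOn Ω u ∧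
  ∃ v : ℕ → Cn n → EReal,
    (∀ j, InE0 Ω (v j)) ∧
    (∀ z ∈ Ω, Antitone fun j => v j z) ∧
    (∀ z ∈ Ω, Tendsto (fun j => v j z) atTop (nhds (u z))) ∧
    (⨆ j, mongeAmpere Ω (v j) Ω) < ⊤

/-- A bounded strictly pseudoconvex domain: a bounded domain `Ω = {ρ < 0}` for some `C²`
defining function `ρ` on a neighborhood of `closure Ω` with nonvanishing gradient on `∂Ω`
and `dd^c ρ ≥ c · dd^c |z|²` for some `c > 0`. -/
def IsStrictlyPseudoconvexDomain (Ω : Set (Cn n)) : Prop :=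
  IsOpen Ω ∧ IsConnected Ω ∧ Bornology.IsBounded Ω ∧
  ∃ (U : Set (Cn n)) (ρ : Cn n → ℝ) (c : ℝ),
    IsOpen U ∧ closure Ω ⊆ U ∧ ContDiffOn ℝ 2 ρ U ∧
    Ω = {z ∈ U | ρ z < 0} ∧
    (∀ z ∈ frontier Ω, fderiv ℝ ρ z ≠ 0) ∧
    0 < c ∧ (∀ z ∈ U, ∀ v : Cn n, c * ‖v‖ ^ 2 ≤ leviForm ρ z v)

/-- A bounded hyperconvex domain: a bounded domain carrying a negative plurisubharmonic
exhaustion function. -/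
def IsHyperconvexDomain (Ω : Set (Cn n)) : Prop :=
  IsOpen Ω ∧ IsConnected Ω ∧ Bornology.IsBounded Ω ∧
  ∃ φ : Cn n → EReal, PlurisubharmonicOn Ω φ ∧ (∀ z ∈ Ω, φ z < 0) ∧
    ∀ c : ℝ, c < 0 →
      IsCompact (closure {z ∈ Ω | φ z < (c : EReal)}) ∧
        closure {z ∈ Ω | φ z < (c : EReal)} ⊆ Ω

/-- A maximal plurisubharmonic function on `Ω`. -/
def IsMaximalPSH (Ω : Set (Cn n)) (u : Cn n → EReal) : Prop :=
  PlurisubharmonicOn Ω u ∧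
  ∀ v, PlurisubharmonicOn Ω v → ∀ K : Set (Cn n), IsCompact K → K ⊆ Ω →
    (∀ z ∈ Ω \ K, v z ≤ u z) → ∀ z ∈ Ω, v z ≤ u z

/-- The Cegrell class `𝓝(Ω)`: plurisubharmonic functions in the domain of definition of the
Monge–Ampère operator whose smallest maximal plurisubharmonic majorant is identically zero. -/
def InClassN (Ω : Set (Cn n)) (u : Cn n → EReal) : Prop :=
  PlurisubharmonicOn Ω u ∧ (∃ μ, IsMongeAmpereOf Ω u μ) ∧ (∀ z ∈ Ω, u z ≤ 0) ∧
  ∀ w, IsMaximalPSH Ω w → (∀ z ∈ Ω, u z ≤ w z) → ∀ z ∈ Ω, (0 : EReal) ≤ w z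

/-- The upper semicontinuous regularization `v*` of a function `v`. -/
def uscRegularization (f : Cn n → EReal) (z : Cn n) : EReal := Filter.limsup f (nhds z)


/-! If the supremum of `u` over `B_{a,ε,z}` were below `-3Aε`, then `B_{a,ε,z}` would lie, up to a
null sphere, in the exceptional set `{1 - 3ε < ‖ξ‖ < 1, u ξ < -3Aε}`. But `B_{a,ε,z}` contains the
dilate by `‖z‖ ≥ 1/2` of the shell `{1 ≤ ‖ξ‖ ≤ 1 + ε}` of an angular sector; comparing the sector
with its dilate by `1 + ε` shows that this shell has volume at least `ε` times that of the unit
sector, which contains a ball of radius `a / 8`. So `B_{a,ε,z}` has volume at least `c ε` with `c`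
depending only on `a` and `n`, against the hypothesis that the exceptional set at `d = 3ε` has
volume `o(ε)`. -/

open scoped Pointwise

instance (n : ℕ) : (volume : Measure (Cn n)).IsAddHaarMeasure :=
  (PiLp.continuousLinearEquiv 2 ℂ (fun _ : Fin n => ℂ)).symm.isAddHaarMeasure_map
    (MeasureSpace.pi.volume : Measure (Fin n → ℂ))

section

variable {E : Type*} [NormedAddCommGroup E] [NormedSpace ℝ E]

def annularSector (e : E) (a r R : ℝ) : Set E :=
  {ξ | ξ ≠ 0 ∧ ‖e - ‖ξ‖⁻¹ • ξ‖ < a ∧ r ≤ ‖ξ‖ ∧ ‖ξ‖ ≤ R}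

theorem inv_norm_smul_smul_of_pos {t : ℝ} (ht : 0 < t) (x : E) :
    ‖t • x‖⁻¹ • (t • x) = ‖x‖⁻¹ • x := by
  rw [norm_smul, Real.norm_of_nonneg ht.le, smul_smul]
  congr 1
  field_simp

theorem smul_annularSector_subset {t : ℝ} (ht : 0 < t) (e : E) (a r R : ℝ) :
    t • annularSector e a r R ⊆ annularSector e a (t * r) (t * R) := by
  rintro _ ⟨ξ, ⟨hξ, hdir, hr, hR⟩, rfl⟩
  rw [annularSector, Set.mem_ofPred_eq, inv_norm_smul_smul_of_pos ht, norm_smul,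
    Real.norm_of_nonneg ht.le]
  exact ⟨smul_ne_zero ht.ne' hξ, hdir, mul_le_mul_of_nonneg_left hr ht.le,
    mul_le_mul_of_nonneg_left hR ht.le⟩

theorem norm_sub_inv_norm_smul_mul_norm_le {e : E} (he : ‖e‖ = 1) {s : ℝ} (hs : 0 ≤ s)
    {x : E} (hx : x ≠ 0) : ‖e - ‖x‖⁻¹ • x‖ * ‖x‖ ≤ 2 * ‖x - s • e‖ := by
  have hse : ‖s • e‖ = s := by rw [norm_smul, he, mul_one, Real.norm_of_nonneg hs]
  have hsplit : ‖x‖ • e - x = (‖x‖ - s) • e - (x - s • e) := by rw [sub_smul]; abel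
  have hscale : ‖x‖ • (e - ‖x‖⁻¹ • x) = ‖x‖ • e - x := by
    rw [smul_sub, smul_smul, mul_inv_cancel₀ (norm_ne_zero_iff.mpr hx), one_smul]
  calc ‖e - ‖x‖⁻¹ • x‖ * ‖x‖ = ‖‖x‖ • e - x‖ := by
        rw [← hscale, norm_smul, Real.norm_of_nonneg (norm_nonneg x), mul_comm]
    _ ≤ |‖x‖ - s| + ‖x - s • e‖ := by
        rw [hsplit]
        refine (norm_sub_le _ _).trans_eq ?_
        rw [norm_smul, he, mul_one, Real.norm_eq_abs]
    _ ≤ 2 * ‖x - s • e‖ := by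
        have := abs_norm_sub_norm_le x (s • e)
        rw [hse] at this
        linarith

theorem ball_subset_annularSector {e : E} (he : ‖e‖ = 1) {a : ℝ} (ha : a < 1 / 2) :
    ball ((2⁻¹ : ℝ) • e) (a / 8) ⊆ annularSector e a 0 1 := by
  intro ξ hξ
  rw [mem_ball_iff_norm] at hξ
  have hnorm : |‖ξ‖ - 2⁻¹| < a / 8 := by
    have := abs_norm_sub_norm_le ξ ((2⁻¹ : ℝ) • e)
    rw [norm_smul, he, mul_one, Real.norm_of_nonneg (by norm_num)] at this
    exact this.trans_lt hξ
  obtain ⟨hlow, hhigh⟩ := abs_lt.mp hnorm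
  have hξ0 : ξ ≠ 0 := norm_pos_iff.mp (by linarith)
  have hdir := norm_sub_inv_norm_smul_mul_norm_le he (by norm_num : (0 : ℝ) ≤ 2⁻¹) hξ0
  refine ⟨hξ0, ?_, norm_nonneg ξ, by linarith⟩
  nlinarith [norm_nonneg (e - ‖ξ‖⁻¹ • ξ)]

variable [FiniteDimensional ℝ E] [MeasurableSpace E] [BorelSpace E] (μ : Measure E)
  [μ.IsAddHaarMeasure]

theorem ofReal_mul_measure_annularSector_le [Nontrivial E] (e : E) (a : ℝ) {ε : ℝ}
    (hε : 0 < ε) :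
    ENNReal.ofReal ε * μ (annularSector e a 0 1) ≤ μ (annularSector e a 1 (1 + ε)) := by
  set K := annularSector e a 0 1
  have hKfin : μ K ≠ ⊤ := by
    refine ((measure_mono fun ξ (hξ : ξ ∈ K) => ?_).trans_lt
      (measure_closedBall_lt_top (x := (0 : E)) (r := 1))).ne
    exact mem_closedBall_zero_iff.mpr hξ.2.2.2
  have hdilate : (1 + ε) • K ⊆ annularSector e a 1 (1 + ε) ∪ K := by
    intro ξ hξ
    obtain ⟨hξ0, hdir, -, hR⟩ := smul_annularSector_subset (by linarith) e a 0 1 hξ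
    rcases le_total 1 ‖ξ‖ with h | h
    · exact Or.inl ⟨hξ0, hdir, h, by simpa using hR⟩
    · exact Or.inr ⟨hξ0, hdir, norm_nonneg ξ, h⟩
  have hpow : ε ≤ (1 + ε) ^ Module.finrank ℝ E - 1 := by
    have hd : (1 : ℝ) ≤ Module.finrank ℝ E := by exact_mod_cast Module.finrank_pos
    nlinarith [one_add_mul_le_pow (by linarith : (-2 : ℝ) ≤ ε) (Module.finrank ℝ E)]
  calc ENNReal.ofReal ε * μ K
      ≤ (ENNReal.ofReal ((1 + ε) ^ Module.finrank ℝ E) - 1) * μ K := by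
        gcongr
        rw [← ENNReal.ofReal_one, ← ENNReal.ofReal_sub _ zero_le_one]
        exact ENNReal.ofReal_le_ofReal hpow
    _ = μ ((1 + ε) • K) - μ K := by
        rw [Measure.addHaar_smul_of_nonneg μ (by linarith), ENNReal.sub_mul fun _ _ => hKfin,
          one_mul]
    _ ≤ μ (annularSector e a 1 (1 + ε)) := by
        rw [tsub_le_iff_right]
        exact (measure_mono hdilate).trans (measure_union_le _ _)

theorem measure_annularSector_ge {e : E} (he : ‖e‖ = 1) {a : ℝ} (ha : a < 1 / 2) {r ε : ℝ}
    (hr : 2⁻¹ ≤ r) (hε : 0 < ε) :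
    ENNReal.ofReal (ε * 2⁻¹ ^ Module.finrank ℝ E) * μ (ball 0 (a / 8)) ≤
      μ (annularSector e a r ((1 + ε) * r)) := by
  have : Nontrivial E := ⟨⟨e, 0, ne_zero_of_norm_ne_zero (he.trans_ne one_ne_zero)⟩⟩
  have hr0 : 0 < r := lt_of_lt_of_le (by norm_num) hr
  calc ENNReal.ofReal (ε * 2⁻¹ ^ Module.finrank ℝ E) * μ (ball 0 (a / 8))
      ≤ ENNReal.ofReal (r ^ Module.finrank ℝ E) *
          (ENNReal.ofReal ε * μ (annularSector e a 0 1)) := by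
        rw [ENNReal.ofReal_mul hε.le, mul_comm (ENNReal.ofReal ε), mul_assoc]
        gcongr ?_ * (_ * ?_)
        · gcongr
        · rw [← Measure.addHaar_ball_center μ ((2⁻¹ : ℝ) • e)]
          exact measure_mono (ball_subset_annularSector he ha)
    _ ≤ μ (r • annularSector e a 1 (1 + ε)) := by
        rw [Measure.addHaar_smul_of_nonneg μ hr0.le]
        gcongr
        exact ofReal_mul_measure_annularSector_le μ e a hε
    _ ≤ μ (annularSector e a r ((1 + ε) * r)) := by
        refine measure_mono ((smul_annularSector_subset hr0 e a 1 (1 + ε)).trans ?_)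
        rw [mul_one, mul_comm]

theorem measure_le_measure_shell_of_forall [Nontrivial E] {S : Set E} {d : ℝ} {p : E → Prop}
    (hS : ∀ ξ ∈ S, 1 - d ≤ ‖ξ‖ ∧ ‖ξ‖ < 1 ∧ p ξ) :
    μ S ≤ μ {ξ | ξ ∈ ball 0 1 ∧ 1 - d < ‖ξ‖ ∧ p ξ} := by
  have hsub : S ⊆ {ξ | ξ ∈ ball 0 1 ∧ 1 - d < ‖ξ‖ ∧ p ξ} ∪ sphere 0 (1 - d) := by
    intro ξ hξ
    obtain ⟨hlow, hhigh, hp⟩ := hS ξ hξ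
    rcases hlow.lt_or_eq with h | h
    · exact Or.inl ⟨mem_ball_zero_iff.mpr hhigh, h, hp⟩
    · exact Or.inr (mem_sphere_zero_iff_norm.mpr h.symm)
  refine (measure_mono hsub).trans ((measure_union_le _ _).trans_eq ?_)
  rw [Measure.addHaar_sphere, add_zero]

end

theorem ENNReal.exists_pos_lt_mul_of_tendsto_div_zero {f : ℝ → ℝ≥0∞}
    (hf : Tendsto (fun d => f d / ENNReal.ofReal d) (𝓝[>] 0) (𝓝 0)) {c : ℝ≥0∞} (hc : c ≠ 0) :
    ∃ δ > 0, ∀ d, 0 < d → d < δ → f d < c * ENNReal.ofReal d := by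
  obtain ⟨δ, hδ, hlt⟩ := Metric.eventually_nhds_iff.mp
    (eventually_nhdsWithin_iff.mp (hf.eventually (gt_mem_nhds (pos_iff_ne_zero.mpr hc))))
  refine ⟨δ, hδ, fun d hd hdδ => ?_⟩
  have := hlt (by rwa [Real.dist_0_eq_abs, abs_of_pos hd]) hd
  rwa [ENNReal.div_lt_iff (Or.inl (ENNReal.ofReal_pos.mpr hd).ne') (Or.inl ENNReal.ofReal_ne_top)]
    at this

theorem statement_15_general {n : ℕ} (u : Cn n → EReal)
    (A : ℝ)
    (hlim : Filter.Tendsto (fun d : ℝ =>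
        volume {ξ | ξ ∈ Metric.ball (0 : Cn n) 1 ∧ 1 - d < ‖ξ‖ ∧
            u ξ < ((-(A * d) : ℝ) : EReal)}
          / ENNReal.ofReal d) (nhdsWithin 0 (Set.Ioi 0)) (nhds 0)) :
    ∀ a : ℝ, 0 < a → a < 1 / 2 → ∃ εa : ℝ, 0 < εa ∧
      ∀ (ε : ℝ) (z : Cn n), 0 < ε → ε ≤ 1 - ‖z‖ → 1 - ‖z‖ ≤ 3 * ε → 3 * ε < εa →
        ((-(3 * A * ε) : ℝ) : EReal) ≤
          ⨆ ξ ∈ {ξ : Cn n | ξ ≠ 0 ∧ ‖(‖z‖)⁻¹ • z - (‖ξ‖)⁻¹ • ξ‖ < a ∧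
            ‖z‖ ≤ ‖ξ‖ ∧ ‖ξ‖ ≤ (1 + ε) * ‖z‖}, u ξ := by
  intro a ha ha2
  set k := Module.finrank ℝ (Cn n)
  -- `c * ofReal (3 * ε)` is the lower bound of `measure_annularSector_ge` for `B_{a,ε,z}`
  set c := ENNReal.ofReal (3⁻¹ * 2⁻¹ ^ k) * volume (ball (0 : Cn n) (a / 8))
  have hc : c ≠ 0 := mul_ne_zero (ENNReal.ofReal_pos.mpr (by positivity)).ne'
    (measure_ball_pos _ _ (by positivity)).ne'
  obtain ⟨δ, hδ, hsmall⟩ := ENNReal.exists_pos_lt_mul_of_tendsto_div_zero hlim hc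
  refine ⟨min δ (1 / 2), lt_min hδ (by norm_num), fun ε z hε hεz hzε hεδ => ?_⟩
  have hz : 2⁻¹ ≤ ‖z‖ := by linarith [min_le_right δ (1 / 2)]
  have he : ‖‖z‖⁻¹ • z‖ = 1 := by
    rw [norm_smul, norm_inv, norm_norm, inv_mul_cancel₀ (by linarith)]
  have : Nontrivial (Cn n) := nontrivial_of_ne z 0 (norm_pos_iff.mp (by linarith))
  by_contra! hsup
  set B := annularSector (‖z‖⁻¹ • z) a ‖z‖ ((1 + ε) * ‖z‖)
  have hBu : ∀ ξ ∈ B, u ξ < ((-(A * (3 * ε)) : ℝ) : EReal) := fun ξ hξ => by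
    rw [show A * (3 * ε) = 3 * A * ε by ring]
    exact (le_biSup u hξ).trans_lt hsup
  refine lt_irrefl (ENNReal.ofReal (ε * 2⁻¹ ^ k) * volume (ball (0 : Cn n) (a / 8))) ?_
  calc _ ≤ volume B := measure_annularSector_ge volume he ha2 hz hε
    _ ≤ _ := measure_le_measure_shell_of_forall volume fun ξ hξ =>
        ⟨by linarith [hξ.2.2.1], by nlinarith [hξ.2.2.2], hBu ξ hξ⟩
    _ < c * ENNReal.ofReal (3 * ε) :=
        hsmall _ (by positivity) (by linarith [min_le_left δ (1 / 2)])
    _ = _ := by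
        rw [mul_right_comm, ← ENNReal.ofReal_mul (by positivity)]
        ring_nf

theorem statement_15 {n : ℕ} (u : Cn n → EReal) (hmeas : Measurable u)
    (hneg : ∀ z ∈ Metric.ball (0 : Cn n) 1, u z < 0)
    (A : ℝ) (hA : 0 < A)
    (hlim : Filter.Tendsto (fun d : ℝ =>
        volume {ξ | ξ ∈ Metric.ball (0 : Cn n) 1 ∧ 1 - d < ‖ξ‖ ∧
            u ξ < ((-(A * d) : ℝ) : EReal)}
          / ENNReal.ofReal d) (nhdsWithin 0 (Set.Ioi 0)) (nhds 0)) :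
    ∀ a : ℝ, 0 < a → a < 1 / 2 → ∃ εa : ℝ, 0 < εa ∧
      ∀ (ε : ℝ) (z : Cn n), 0 < ε → ε ≤ 1 - ‖z‖ → 1 - ‖z‖ ≤ 3 * ε → 3 * ε < εa →
        ((-(3 * A * ε) : ℝ) : EReal) ≤
          ⨆ ξ ∈ {ξ : Cn n | ξ ≠ 0 ∧ ‖(‖z‖)⁻¹ • z - (‖ξ‖)⁻¹ • ξ‖ < a ∧
            ‖z‖ ≤ ‖ξ‖ ∧ ‖ξ‖ ≤ (1 + ε) * ‖z‖}, u ξ :=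
  statement_15_general u A hlim

end
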